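/- (Otsuki's lemma) Let II : V × V → W be a symmetric bilinear map between real inner product spaces with dim V = m ≥ 2 and dim W ≤ m − 1. If II(X,X) ≠ 0 for every X ≠ 0, then there exist linearly independent vectors X, Y ∈ V such that II(X,X) = II(Y,Y) and II(X,Y) = 0. -/

import Mathlib

open MvPolynomial

section OtsukiAux

lemma otsuki_hc_mul {σ R : Type*} [CommRing R] (f q : MvPolynomial σ R)
    (hf : f.IsHomogeneous 2) (K : ℕ) :
    homogeneousComponent (K + 2) (q * f) = homogeneousComponent K q * f := by
  conv_lhs => rw [← sum_homogeneousComponent q, Finset.sum_mul, map_sum]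
  have h1 : ∀ i : ℕ, homogeneousComponent (K + 2) (homogeneousComponent i q * f)
      = if K + 2 = i + 2 then homogeneousComponent i q * f else 0 := by
    intro i
    exact homogeneousComponent_of_mem
      ((mem_homogeneousSubmodule _ _).2 ((homogeneousComponent_isHomogeneous i q).mul hf))
  simp only [h1]
  simp only [add_left_inj, eq_comm (a := K)]
  rw [Finset.sum_ite_eq' (Finset.range (q.totalDegree + 1)) K
    (fun i => homogeneousComponent i q * f)]
  split_ifs with h
  · rfl
  · rw [Finset.mem_range, not_lt] at h
    rw [homogeneousComponent_eq_zero _ _ (by omega), zero_mul]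


noncomputable def otsukiAux {m n : ℕ} (f : Fin n → MvPolynomial (Fin m) ℂ) (D d : ℕ) :
    (Fin n → Fin (d + 1)) × (Fin m → Fin D) → MvPolynomial (Fin m) ℂ :=
  fun p => (∏ j, f j ^ (p.1 j : ℕ)) * ∏ i, X i ^ (p.2 i : ℕ)

lemma otsukiAux_mono {m n : ℕ} (f : Fin n → MvPolynomial (Fin m) ℂ) (D : ℕ) {d₁ d₂ : ℕ}
    (h : d₁ ≤ d₂) : Set.range (otsukiAux f D d₁) ⊆ Set.range (otsukiAux f D d₂) := by
  rintro _ ⟨⟨g, e⟩, rfl⟩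
  exact ⟨⟨fun j => ⟨g j, by have := (g j).2; omega⟩, e⟩, rfl⟩

lemma otsukiAux_mul_mem {m n : ℕ} (f : Fin n → MvPolynomial (Fin m) ℂ) (D d : ℕ)
    (j : Fin n) {p : MvPolynomial (Fin m) ℂ}
    (hp : p ∈ Submodule.span ℂ (Set.range (otsukiAux f D d))) :
    f j * p ∈ Submodule.span ℂ (Set.range (otsukiAux f D (d + 1))) := by
  induction hp using Submodule.span_induction with
  | mem x hx =>
    obtain ⟨⟨g, e⟩, rfl⟩ := hx
    apply Submodule.subset_span
    refine ⟨⟨fun j' => if j' = j then ⟨g j + 1, by have := (g j).2; omega⟩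
      else ⟨g j', by have := (g j').2; omega⟩, e⟩, ?_⟩
    simp only [otsukiAux]
    rw [← mul_assoc]
    congr 1
    rw [Finset.prod_eq_mul_prod_sdiff_singleton_of_mem (Finset.mem_univ j),
      Finset.prod_eq_mul_prod_sdiff_singleton_of_mem (Finset.mem_univ j)
        (fun i => f i ^ (g i : ℕ)), ← mul_assoc]
    congr 1
    · simp [pow_succ, mul_comm]
    · apply Finset.prod_congr rfl
      intro i hi
      simp only [Finset.mem_sdiff, Finset.mem_singleton] at hi
      simp [hi.2]
  | zero => simp
  | add x y _ _ hx hy => rw [mul_add]; exact add_mem hx hy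
  | smul a x _ hx => rw [mul_smul_comm]; exact Submodule.smul_mem _ _ hx

lemma otsuki_span {m n K0 : ℕ} (hm : 0 < m) (f : Fin n → MvPolynomial (Fin m) ℂ)
    (hX : ∀ i : Fin m, ∃ h : Fin n → MvPolynomial (Fin m) ℂ,
      (∀ j, (h j).IsHomogeneous K0) ∧ X i ^ (K0 + 2) = ∑ j, h j * f j)
    (d : ℕ) : ∀ p : MvPolynomial (Fin m) ℂ, p.totalDegree ≤ d →
      p ∈ Submodule.span ℂ (Set.range (otsukiAux f (m * (K0 + 2)) d)) := by
  induction d using Nat.strong_induction_on with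
  | _ d IH =>
  intro p hp
  rw [← support_sum_monomial_coeff p]
  apply Submodule.sum_mem
  intro a ha
  have hcs : monomial a (coeff a p) = (coeff a p) • monomial a (1 : ℂ) := by
    rw [smul_monomial, smul_eq_mul, mul_one]
  rw [hcs]
  apply Submodule.smul_mem
  clear hcs
  have had : (a.sum fun _ e => e) ≤ d := (le_totalDegree ha).trans hp
  clear ha hp p
  have hsum : (a.sum fun _ e => e) = ∑ i, a i := Finsupp.sum_fintype _ _ (fun _ => rfl)
  by_cases hD : (a.sum fun _ e => e) < m * (K0 + 2)
  · apply Submodule.subset_span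
    refine ⟨⟨fun _ => ⟨0, by omega⟩, fun i => ⟨a i, ?_⟩⟩, ?_⟩
    · have : a i ≤ ∑ i', a i' := Finset.single_le_sum (fun _ _ => Nat.zero_le _) (Finset.mem_univ i)
      omega
    · simp only [otsukiAux, Fin.val_mk, pow_zero, Finset.prod_const_one, one_mul]
      rw [monomial_eq, C_1, one_mul, Finsupp.prod_pow]
  · push_neg at hD
    have hKa : ∃ i, K0 + 2 ≤ a i := by
      by_contra hc
      push_neg at hc
      have : ∑ i, a i ≤ ∑ _i : Fin m, (K0 + 1) :=
        Finset.sum_le_sum (fun i _ => by have := hc i; omega)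
      simp only [Finset.sum_const, Finset.card_univ, Fintype.card_fin, smul_eq_mul] at this
      have hr : m * (K0 + 1) + m = m * (K0 + 2) := by ring
      omega
    obtain ⟨i, hi⟩ := hKa
    obtain ⟨h, hhom, hXi⟩ := hX i
    set a' := a - Finsupp.single i (K0 + 2) with ha'def
    have ha' : Finsupp.single i (K0 + 2) + a' = a := by
      ext x
      simp only [Finsupp.coe_add, Pi.add_apply, ha'def, Finsupp.tsub_apply,
        Finsupp.single_apply]
      split_ifs with hx
      · subst hx; omega
      · simp
    have ha'sum : (K0 + 2) + (a'.sum fun _ e => e) = a.sum fun _ e => e := by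
      conv_rhs => rw [← ha']
      rw [Finsupp.sum_add_index' (fun _ => rfl) (fun _ _ _ => rfl),
        Finsupp.sum_single_index rfl]
    have key : monomial a (1 : ℂ) = ∑ j, f j * (h j * monomial a' 1) := by
      have h1 : monomial a (1 : ℂ) = X i ^ (K0 + 2) * monomial a' 1 := by
        rw [X_pow_eq_monomial, monomial_mul, one_mul, ha']
      rw [h1, hXi, Finset.sum_mul]
      exact Finset.sum_congr rfl (fun j _ => by ring)
    rw [key]
    apply Submodule.sum_mem
    intro j _
    have hd2 : 2 ≤ d := by omega
    have hdeg : (h j * monomial a' 1).totalDegree ≤ d - 2 := by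
      refine (totalDegree_mul _ _).trans ?_
      have h1 : (h j).totalDegree ≤ K0 := (hhom j).totalDegree_le
      have h2 : (monomial a' (1 : ℂ)).totalDegree ≤ a'.sum fun _ e => e :=
        totalDegree_monomial_le _ _
      omega
    have hmem := IH (d - 2) (by omega) _ hdeg
    have := otsukiAux_mul_mem f (m * (K0 + 2)) (d - 2) j hmem
    exact Submodule.span_mono (otsukiAux_mono f _ (by omega)) this

lemma otsuki_count {m n K0 : ℕ} (hnm : n < m) (f : Fin n → MvPolynomial (Fin m) ℂ)
    (hX : ∀ i : Fin m, ∃ h : Fin n → MvPolynomial (Fin m) ℂ,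
      (∀ j, (h j).IsHomogeneous K0) ∧ X i ^ (K0 + 2) = ∑ j, h j * f j) : False := by
  classical
  have hm : 0 < m := lt_of_le_of_lt (Nat.zero_le n) hnm
  set D := m * (K0 + 2) with hD
  have hDpos : 0 < D := by positivity
  set d := (m * D) ^ m with hd
  have hdpos : 0 < d := by positivity
  set q := d / m with hq
  clear_value q
  clear_value d
  clear_value D
  -- the linearly independent family of monomials
  set g : (Fin m → Fin (q + 1)) → (Fin m →₀ ℕ) :=
    fun e => Finsupp.equivFunOnFinite.symm (fun i => (e i : ℕ)) with hg
  have hginj : Function.Injective g := by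
    intro e₁ e₂ he
    have := Finsupp.equivFunOnFinite.symm.injective he
    funext i
    exact Fin.val_injective (congrFun this i)
  have hindep : LinearIndependent ℂ (fun e => monomial (g e) (1 : ℂ)) := by
    have := (basisMonomials (Fin m) ℂ).linearIndependent.comp g hginj
    have hcoe : (fun e => monomial (g e) (1 : ℂ)) = (basisMonomials (Fin m) ℂ) ∘ g := by
      funext e
      simp [coe_basisMonomials]
    rw [hcoe]
    exact this
  have hrange : Set.range (fun e : Fin m → Fin (q + 1) => monomial (g e) (1 : ℂ))
      ≤ Submodule.span ℂ (Set.range (otsukiAux f D d)) := by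
    rintro _ ⟨e, rfl⟩
    rw [hD]
    apply otsuki_span hm f hX d
    refine (totalDegree_monomial_le _ _).trans ?_
    have h1 : ((g e).sum fun _ => (id : ℕ → ℕ)) = ∑ i, (e i : ℕ) :=
      Finsupp.sum_fintype _ _ (fun _ => rfl)
    rw [h1]
    have h2 : ∑ i, (e i : ℕ) ≤ ∑ _i : Fin m, q :=
      Finset.sum_le_sum (fun i _ => by have := (e i).2; omega)
    simp only [Finset.sum_const, Finset.card_univ, Fintype.card_fin, smul_eq_mul] at h2
    exact h2.trans (by rw [hq]; exact Nat.mul_div_le d m)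
  have hcard := linearIndependent_le_span' _ hindep _ hrange
  rw [Cardinal.mk_fintype, Nat.cast_le] at hcard
  have hcard2 : Fintype.card (Set.range (otsukiAux f D d))
      ≤ (d + 1) ^ n * D ^ m := by
    refine (Fintype.card_range_le _).trans ?_
    rw [Fintype.card_prod, Fintype.card_fun, Fintype.card_fun]
    simp
  have hmain : (q + 1) ^ m ≤ (d + 1) ^ n * D ^ m := by
    refine le_trans (le_of_eq ?_) (hcard.trans hcard2)
    rw [Fintype.card_fun]
    simp
  -- arithmetic contradiction
  have h3 : d + 1 ≤ (q + 1) * m := by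
    have e1 := Nat.div_add_mod d m
    have h4 : d % m < m := Nat.mod_lt _ hm
    have e2 : (q + 1) * m = m * q + m := by ring
    have e3 : m * q = m * (d / m) := by rw [hq]
    omega
  have h5 : (d + 1) ^ m ≤ (d + 1) ^ n * (m * D) ^ m := by
    calc (d + 1) ^ m ≤ ((q + 1) * m) ^ m := Nat.pow_le_pow_left h3 m
    _ = (q + 1) ^ m * m ^ m := by rw [mul_pow]
    _ ≤ ((d + 1) ^ n * D ^ m) * m ^ m := Nat.mul_le_mul_right _ hmain
    _ = (d + 1) ^ n * (m * D) ^ m := by ring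
  have h6 : (d + 1) ^ (m - n) ≤ (m * D) ^ m := by
    have h7 : (d + 1) ^ m = (d + 1) ^ n * (d + 1) ^ (m - n) := by
      rw [← pow_add]
      congr 1
      omega
    rw [h7] at h5
    exact Nat.le_of_mul_le_mul_left h5 (by positivity)
  have h8 : d + 1 ≤ (d + 1) ^ (m - n) := Nat.le_self_pow (by omega) _
  omega

lemma otsuki_alg {m n : ℕ} (hnm : n < m) (f : Fin n → MvPolynomial (Fin m) ℂ)
    (hf : ∀ j, (f j).IsHomogeneous 2) :
    ∃ z : Fin m → ℂ, z ≠ 0 ∧ ∀ j, eval z (f j) = 0 := by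
  by_contra hcon
  push_neg at hcon
  set I := Ideal.span (Set.range f) with hI
  have hrad : ∀ i : Fin m, X i ∈ I.radical := by
    intro i
    rw [← vanishingIdeal_zeroLocus_eq_radical (K := ℂ)]
    intro x hx
    have hfx : ∀ j, eval x (f j) = 0 := fun j =>
      hx (f j) (Ideal.subset_span (Set.mem_range_self j))
    have hx0 : x = 0 := by
      by_contra hxne
      obtain ⟨j, hj⟩ := hcon x hxne
      exact hj (hfx j)
    rw [aeval_X, hx0]
    rfl
  have hpow : ∀ i : Fin m, ∃ kk : ℕ, X i ^ kk ∈ I := fun i => hrad i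
  choose k hk using hpow
  set K0 := Finset.univ.sup k with hK0
  have hXK : ∀ i, X i ^ (K0 + 2) ∈ I := by
    intro i
    have hle : k i ≤ K0 + 2 := by
      have := Finset.le_sup (f := k) (Finset.mem_univ i)
      omega
    have he : (X i : MvPolynomial (Fin m) ℂ) ^ (K0 + 2) = X i ^ (k i) * X i ^ (K0 + 2 - k i) := by
      rw [← pow_add]
      congr 1
      omega
    rw [he]
    exact Ideal.mul_mem_right _ _ (hk i)
  have hXh : ∀ i : Fin m, ∃ h : Fin n → MvPolynomial (Fin m) ℂ,
      (∀ j, (h j).IsHomogeneous K0) ∧ X i ^ (K0 + 2) = ∑ j, h j * f j := by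
    intro i
    obtain ⟨c, hc⟩ := Ideal.mem_span_range_iff_exists_fun.1 (hXK i)
    refine ⟨fun j => homogeneousComponent K0 (c j),
      fun j => homogeneousComponent_isHomogeneous _ _, ?_⟩
    have h0 : X i ^ (K0 + 2) = homogeneousComponent (K0 + 2) ((X i : MvPolynomial (Fin m) ℂ) ^ (K0 + 2)) := by
      rw [homogeneousComponent_of_mem
        ((mem_homogeneousSubmodule _ _).2 (isHomogeneous_X_pow i (K0 + 2))), if_pos rfl]
    conv_lhs => rw [h0, ← hc]
    rw [map_sum]
    exact Finset.sum_congr rfl fun j _ => otsuki_hc_mul (f j) (c j) (hf j) K0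
  exact otsuki_count hnm f hXh

end OtsukiAux

/-- **Otsuki's lemma.** Let `II : V × V → W` be a symmetric bilinear map between real
inner product spaces with `dim V = m ≥ 2` and `dim W ≤ m − 1`.  If `II(X,X) ≠ 0` for
every `X ≠ 0`, then there exist linearly independent vectors `X, Y ∈ V` with
`II(X,X) = II(Y,Y)` and `II(X,Y) = 0`. -/
theorem otsuki_lemma {V W : Type*}
    [NormedAddCommGroup V] [InnerProductSpace ℝ V] [FiniteDimensional ℝ V]
    [NormedAddCommGroup W] [InnerProductSpace ℝ W] [FiniteDimensional ℝ W]
    (m : ℕ) (hm : 2 ≤ m) (hV : Module.finrank ℝ V = m) (hW : Module.finrank ℝ W ≤ m - 1)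
    (II : V →ₗ[ℝ] V →ₗ[ℝ] W) (hsymm : ∀ X Y : V, II X Y = II Y X)
    (hdef : ∀ X : V, X ≠ 0 → II X X ≠ 0) :
    ∃ X Y : V, LinearIndependent ℝ ![X, Y] ∧ II X X = II Y Y ∧ II X Y = 0 := by
  classical
  set M := Module.finrank ℝ V with hM
  set N := Module.finrank ℝ W with hN
  have hNM : N < M := by omega
  let b : Module.Basis (Fin M) ℝ V := Module.finBasis ℝ V
  let c : Module.Basis (Fin N) ℝ W := Module.finBasis ℝ W
  set a : Fin N → Fin M → Fin M → ℝ := fun j p q => c.repr (II (b p) (b q)) j with ha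
  set f : Fin N → MvPolynomial (Fin M) ℂ := fun j =>
    ∑ p, ∑ q, (MvPolynomial.C ((a j p q : ℝ) : ℂ)) * (X p * X q) with hf
  have hfhom : ∀ j, (f j).IsHomogeneous 2 := by
    intro j
    apply IsHomogeneous.sum
    intro p _
    apply IsHomogeneous.sum
    intro q _
    exact ((isHomogeneous_X _ p).mul (isHomogeneous_X _ q)).C_mul _
  obtain ⟨z, hz0, hz⟩ := otsuki_alg hNM f hfhom
  set x : Fin M → ℝ := fun p => (z p).re with hx
  set y : Fin M → ℝ := fun p => (z p).im with hy
  set X0 : V := ∑ p, x p • b p with hX0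
  set Y0 : V := ∑ p, y p • b p with hY0
  -- the evaluation identity
  have heval : ∀ j, (∑ p, ∑ q, ((a j p q : ℝ) : ℂ) * (z p * z q)) = 0 := by
    intro j
    have := hz j
    rw [hf] at this
    simpa [eval_sum, eval_mul, eval_C, eval_X] using this
  have hRe : ∀ j, ∑ p, ∑ q, a j p q * (x p * x q - y p * y q) = 0 := by
    intro j
    have := congrArg Complex.re (heval j)
    simpa [Complex.re_sum, Complex.mul_re, Complex.ofReal_re, Complex.ofReal_im,
      hx, hy, mul_sub] using this
  have hIm : ∀ j, ∑ p, ∑ q, a j p q * (x p * y q + y p * x q) = 0 := by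
    intro j
    have := congrArg Complex.im (heval j)
    simpa [Complex.im_sum, Complex.mul_im, Complex.ofReal_re, Complex.ofReal_im,
      hx, hy, mul_add] using this
  -- bilinear expansion
  have hrep : ∀ (u v : Fin M → ℝ) (j : Fin N),
      c.repr (II (∑ p, u p • b p) (∑ q, v q • b q)) j = ∑ p, ∑ q, a j p q * (u p * v q) := by
    intro u v j
    have hb : II (∑ p, u p • b p) (∑ q, v q • b q)
        = ∑ p, ∑ q, (u p * v q) • II (b p) (b q) := by
      rw [map_sum II]
      rw [LinearMap.coe_sum, Finset.sum_apply]
      refine Finset.sum_congr rfl fun p _ => ?_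
      rw [map_smul II, LinearMap.smul_apply, map_sum, Finset.smul_sum]
      refine Finset.sum_congr rfl fun q _ => ?_
      rw [map_smul, smul_smul]
    rw [hb, map_sum, Finsupp.finset_sum_apply]
    refine Finset.sum_congr rfl fun p _ => ?_
    rw [map_sum, Finsupp.finset_sum_apply]
    refine Finset.sum_congr rfl fun q _ => ?_
    rw [map_smul]
    simp [ha, mul_comm]
  have hXXYY : II X0 X0 = II Y0 Y0 := by
    apply c.ext_elem
    intro j
    have h1 := hrep x x j
    have h2 := hrep y y j
    have h3 := hRe j
    rw [hX0, hY0, h1, h2]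
    have : (∑ p, ∑ q, a j p q * (x p * x q)) - (∑ p, ∑ q, a j p q * (y p * y q)) = 0 := by
      rw [← Finset.sum_sub_distrib]
      rw [← h3]
      refine Finset.sum_congr rfl fun p _ => ?_
      rw [← Finset.sum_sub_distrib]
      refine Finset.sum_congr rfl fun q _ => ?_
      ring
    linarith [this]
  have hXY0 : II X0 Y0 = 0 := by
    apply c.ext_elem
    intro j
    have h1 := hrep x y j
    have h2 := hrep y x j
    have h3 := hIm j
    have hs : II Y0 X0 = II X0 Y0 := hsymm Y0 X0
    have key : c.repr (II X0 Y0) j + c.repr (II Y0 X0) j = 0 := by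
      rw [hX0, hY0, h1, h2]
      rw [← Finset.sum_add_distrib, ← h3]
      refine Finset.sum_congr rfl fun p _ => ?_
      rw [← Finset.sum_add_distrib]
      refine Finset.sum_congr rfl fun q _ => ?_
      ring
    rw [hs] at key
    have : c.repr (II X0 Y0) j = 0 := by linarith
    simp [this]
  -- nontriviality
  have hne : ¬(X0 = 0 ∧ Y0 = 0) := by
    rintro ⟨hX0z, hY0z⟩
    apply hz0
    have hxz : ∀ p, x p = 0 := by
      have := Fintype.linearIndependent_iff.1 b.linearIndependent x (by rw [← hX0]; exact hX0z)
      exact this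
    have hyz : ∀ p, y p = 0 := by
      have := Fintype.linearIndependent_iff.1 b.linearIndependent y (by rw [← hY0]; exact hY0z)
      exact this
    funext p
    have h1 := hxz p
    have h2 := hyz p
    rw [hx] at h1
    rw [hy] at h2
    simp only at h1 h2
    exact Complex.ext h1 h2
  have hX0ne : X0 ≠ 0 := by
    intro hc
    apply hne
    refine ⟨hc, ?_⟩
    by_contra hYne
    have := hdef Y0 hYne
    rw [← hXXYY, hc] at this
    simp at this
  have hY0ne : Y0 ≠ 0 := by
    intro hc
    apply hne
    refine ⟨?_, hc⟩
    by_contra hXne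
    have := hdef X0 hXne
    rw [hXXYY, hc] at this
    simp at this
  refine ⟨X0, Y0, ?_, hXXYY, hXY0⟩
  rw [LinearIndependent.pair_iff]
  intro s t hst
  have h1 : II (s • X0 + t • Y0) X0 = 0 := by rw [hst]; simp
  rw [map_add, map_smul, map_smul, LinearMap.add_apply, LinearMap.smul_apply,
    LinearMap.smul_apply, hsymm Y0 X0, hXY0, smul_zero, add_zero] at h1
  have hs : s = 0 := by
    by_contra hsne
    exact hdef X0 hX0ne (by
      have := congrArg (fun w => (s⁻¹ : ℝ) • w) h1
      simpa [smul_smul, inv_mul_cancel₀ hsne] using this)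
  subst hs
  simp only [zero_smul, zero_add] at hst
  have ht : t = 0 := by
    by_contra htne
    exact hY0ne (by
      have := congrArg (fun w => (t⁻¹ : ℝ) • w) hst
      simpa [smul_smul, inv_mul_cancel₀ htne] using this)
  exact ⟨rfl, ht⟩
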